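/- Let L be a diffusion generator Lf = b·∇f + ∇·(D∇f) with constant positive-semidefinite diffusion matrix D, and let C₁, C₂ be linear operators. For Φ(f) = C₁f · C₂f, the generalized Γ operator Γ_Φ(f) := (1/2)(LΦ(f) − dΦ(f)·Lf) satisfies Γ_Φ(f) = Γ₁(C₁f, C₂f) + (1/2) C₁f·[L,C₂]f + (1/2)[L,C₁]f·C₂f, where Γ₁ is the carré du champ of L. -/

import Mathlib

/-!
The identity is the Leibniz rule `L(uv) = u Lv + v Lu + 2 Γ₁(u, v)` for `u = C₁f`, `v = C₂f`,
rearranged: the product rule for second derivatives produces the cross terms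
`∂ᵢu ∂ⱼv + ∂ⱼu ∂ᵢv`, which the symmetry of `D` folds into `2 Γ₁(u, v)`, and subtracting
`dΦ(f)·Lf = C₁f · C₂(Lf) + C₁(Lf) · C₂f` leaves the two commutator terms.
-/

open scoped RealInnerProductSpace

noncomputable section

/-- Diffusion generator `Lf = b·∇f + ∇·(D∇f)` with constant diffusion matrix `D`. -/
def Lgen (n : ℕ) (b : EuclideanSpace ℝ (Fin n) → EuclideanSpace ℝ (Fin n))
    (Dm : Matrix (Fin n) (Fin n) ℝ) (f : EuclideanSpace ℝ (Fin n) → ℝ)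
    (x : EuclideanSpace ℝ (Fin n)) : ℝ :=
  ⟪b x, gradient f x⟫ + ∑ i : Fin n, ∑ j : Fin n,
    Dm i j * iteratedFDeriv ℝ 2 f x ![EuclideanSpace.single i 1, EuclideanSpace.single j 1]

/-- Carré du champ `Γ₁(f,g) = (∇f)ᵀ D ∇g`. -/
def carre (n : ℕ) (Dm : Matrix (Fin n) (Fin n) ℝ)
    (f g : EuclideanSpace ℝ (Fin n) → ℝ) (x : EuclideanSpace ℝ (Fin n)) : ℝ :=
  ∑ i : Fin n, ∑ j : Fin n,
    Dm i j * fderiv ℝ f x (EuclideanSpace.single i 1) * fderiv ℝ g x (EuclideanSpace.single j 1)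

section Leibniz

variable {E : Type*} [NormedAddCommGroup E] [NormedSpace ℝ E] {u v : E → ℝ}

theorem fderiv_fderiv_mul_apply (hu : ContDiff ℝ 2 u) (hv : ContDiff ℝ 2 v) (x a c : E) :
    fderiv ℝ (fderiv ℝ (fun y => u y * v y)) x a c
      = u x * fderiv ℝ (fderiv ℝ v) x a c + v x * fderiv ℝ (fderiv ℝ u) x a c
        + fderiv ℝ u x a * fderiv ℝ v x c + fderiv ℝ u x c * fderiv ℝ v x a := by
  have hdu : Differentiable ℝ u := hu.differentiable (by norm_num)
  have hdv : Differentiable ℝ v := hv.differentiable (by norm_num)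
  have hdu' : Differentiable ℝ (fderiv ℝ u) :=
    (hu.fderiv_right (m := 1) (by norm_num)).differentiable (by norm_num)
  have hdv' : Differentiable ℝ (fderiv ℝ v) :=
    (hv.fderiv_right (m := 1) (by norm_num)).differentiable (by norm_num)
  have first_deriv :
      fderiv ℝ (fun y => u y * v y) = fun y => u y • fderiv ℝ v y + v y • fderiv ℝ u y := by
    funext y
    simpa [smul_smul] using fderiv_fun_mul (hdu y) (hdv y)
  rw [first_deriv, fderiv_fun_add (f := fun y => u y • fderiv ℝ v y)
      (g := fun y => v y • fderiv ℝ u y) ((hdu x).smul (hdv' x)) ((hdv x).smul (hdu' x)),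
    fderiv_fun_smul (hdu x) (hdv' x), fderiv_fun_smul (hdv x) (hdu' x)]
  simp only [add_apply, smul_apply, ContinuousLinearMap.smulRight_apply, smul_eq_mul]
  ring

theorem iteratedFDeriv_two_mul_apply (hu : ContDiff ℝ 2 u) (hv : ContDiff ℝ 2 v) (x a c : E) :
    iteratedFDeriv ℝ 2 (fun y => u y * v y) x ![a, c]
      = u x * iteratedFDeriv ℝ 2 v x ![a, c] + v x * iteratedFDeriv ℝ 2 u x ![a, c]
        + fderiv ℝ u x a * fderiv ℝ v x c + fderiv ℝ u x c * fderiv ℝ v x a := by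
  simp only [iteratedFDeriv_two_apply, Matrix.cons_val_zero, Matrix.cons_val_one]
  exact fderiv_fderiv_mul_apply hu hv x a c

end Leibniz

theorem inner_gradient_eq_fderiv {F : Type*} [NormedAddCommGroup F] [InnerProductSpace ℝ F]
    [CompleteSpace F] (f : F → ℝ) (x w : F) : ⟪w, gradient f x⟫ = fderiv ℝ f x w := by
  rw [real_inner_comm, ← toDual_gradient, InnerProductSpace.toDual_apply_apply]

theorem inner_gradient_mul {F : Type*} [NormedAddCommGroup F] [InnerProductSpace ℝ F]
    [CompleteSpace F] {u v : F → ℝ} {x : F} (hu : DifferentiableAt ℝ u x)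
    (hv : DifferentiableAt ℝ v x) (w : F) :
    ⟪w, gradient (fun y => u y * v y) x⟫ = u x * ⟪w, gradient v x⟫ + v x * ⟪w, gradient u x⟫ := by
  simp only [inner_gradient_eq_fderiv, fderiv_fun_mul hu hv, add_apply, smul_apply, smul_eq_mul]

section Generator

variable {n : ℕ} {Dm : Matrix (Fin n) (Fin n) ℝ} {u v : EuclideanSpace ℝ (Fin n) → ℝ}

theorem carre_comm (hsym : Dm.IsSymm) (x : EuclideanSpace ℝ (Fin n)) :
    carre n Dm v u x = carre n Dm u v x := by
  unfold carre
  rw [Finset.sum_comm]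
  refine Finset.sum_congr rfl fun i _ => Finset.sum_congr rfl fun j _ => ?_
  rw [hsym.apply i j]
  ring

theorem sum_hessian_mul (hsym : Dm.IsSymm) (hu : ContDiff ℝ 2 u) (hv : ContDiff ℝ 2 v)
    (x : EuclideanSpace ℝ (Fin n)) :
    ∑ i, ∑ j, Dm i j * iteratedFDeriv ℝ 2 (fun y => u y * v y) x
        ![EuclideanSpace.single i 1, EuclideanSpace.single j 1]
      = u x * ∑ i, ∑ j, Dm i j * iteratedFDeriv ℝ 2 v x
            ![EuclideanSpace.single i 1, EuclideanSpace.single j 1]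
        + v x * ∑ i, ∑ j, Dm i j * iteratedFDeriv ℝ 2 u x
            ![EuclideanSpace.single i 1, EuclideanSpace.single j 1]
        + 2 * carre n Dm u v x := by
  rw [two_mul]
  nth_rw 2 [← carre_comm hsym]
  simp only [carre, iteratedFDeriv_two_mul_apply hu hv, Finset.mul_sum, ← Finset.sum_add_distrib]
  refine Finset.sum_congr rfl fun i _ => Finset.sum_congr rfl fun j _ => ?_
  ring

theorem Lgen_mul (b : EuclideanSpace ℝ (Fin n) → EuclideanSpace ℝ (Fin n)) (hsym : Dm.IsSymm)
    (hu : ContDiff ℝ 2 u) (hv : ContDiff ℝ 2 v) (x : EuclideanSpace ℝ (Fin n)) :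
    Lgen n b Dm (fun y => u y * v y) x
      = u x * Lgen n b Dm v x + v x * Lgen n b Dm u x + 2 * carre n Dm u v x := by
  unfold Lgen
  rw [inner_gradient_mul (hu.differentiable (by norm_num) x) (hv.differentiable (by norm_num) x),
    sum_hessian_mul hsym hu hv]
  ring

end Generator

theorem gammaPhi_product_general
    (n : ℕ) (b : EuclideanSpace ℝ (Fin n) → EuclideanSpace ℝ (Fin n))
    (Dm : Matrix (Fin n) (Fin n) ℝ) (hD : Dm.PosSemidef)
    (C₁ C₂ : (EuclideanSpace ℝ (Fin n) → ℝ) →ₗ[ℝ] (EuclideanSpace ℝ (Fin n) → ℝ))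
    (f : EuclideanSpace ℝ (Fin n) → ℝ)
    (hC₁f : ContDiff ℝ 2 (C₁ f)) (hC₂f : ContDiff ℝ 2 (C₂ f)) :
    ∀ x,
      (1 / 2) * (Lgen n b Dm (fun y => C₁ f y * C₂ f y) x
          - (C₁ f x * C₂ (Lgen n b Dm f) x + C₁ (Lgen n b Dm f) x * C₂ f x))
      = carre n Dm (C₁ f) (C₂ f) x
          + (1 / 2) * (C₁ f x * (Lgen n b Dm (C₂ f) x - C₂ (Lgen n b Dm f) x))
          + (1 / 2) * ((Lgen n b Dm (C₁ f) x - C₁ (Lgen n b Dm f) x) * C₂ f x) := by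
  intro x
  have hsym : Dm.IsSymm := Matrix.isHermitian_iff_isSymm.mp hD.isHermitian
  rw [Lgen_mul b hsym hC₁f hC₂f x]
  ring

/-- For `Φ(f) = C₁f · C₂f` with `C₁, C₂` linear operators, the generalized Γ operator
`Γ_Φ(f) = (1/2)(LΦ(f) − dΦ(f)·Lf)` (with `dΦ(f)·g = C₁f·C₂g + C₁g·C₂f`) equals
`Γ₁(C₁f, C₂f) + (1/2) C₁f·[L,C₂]f + (1/2)[L,C₁]f·C₂f`. -/
theorem gammaPhi_product
    (n : ℕ) (b : EuclideanSpace ℝ (Fin n) → EuclideanSpace ℝ (Fin n))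
    (Dm : Matrix (Fin n) (Fin n) ℝ) (hD : Dm.PosSemidef)
    (C₁ C₂ : (EuclideanSpace ℝ (Fin n) → ℝ) →ₗ[ℝ] (EuclideanSpace ℝ (Fin n) → ℝ))
    (f : EuclideanSpace ℝ (Fin n) → ℝ)
    (hf : ContDiff ℝ 2 f) (hC₁f : ContDiff ℝ 2 (C₁ f)) (hC₂f : ContDiff ℝ 2 (C₂ f)) :
    ∀ x,
      (1 / 2) * (Lgen n b Dm (fun y => C₁ f y * C₂ f y) x
          - (C₁ f x * C₂ (Lgen n b Dm f) x + C₁ (Lgen n b Dm f) x * C₂ f x))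
      = carre n Dm (C₁ f) (C₂ f) x
          + (1 / 2) * (C₁ f x * (Lgen n b Dm (C₂ f) x - C₂ (Lgen n b Dm f) x))
          + (1 / 2) * ((Lgen n b Dm (C₁ f) x - C₁ (Lgen n b Dm f) x) * C₂ f x) :=
  gammaPhi_product_general n b Dm hD C₁ C₂ f hC₁f hC₂f
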